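/- arXiv:2601.20873 — 3 statements merged into one kernel-verified Lean document; each statement's English description precedes it below -/
import Mathlib

section
/- For real α > -1, y > 0, and natural numbers m and n ≥ 1, the three-term recurrence holds: (n+1) I_{m,n+1} - (2n + α + 1 + 1/y) I_{m,n} + (n+α) I_{m,n-1} = -(1/y) · (Γ(α+n+1)/n!) · δ_{m,n}, where δ_{m,n} is the Kronecker delta. -/
/-!
Expanding `L_n^{(α)}(x) = Γ(α+n+1)/n! · Σ_j C(n,j) (-x)^j / Γ(α+j+1)`, the Laguerre recurrence
`(n+1) L_{n+1} - (2n+α+1) L_n + (n+α) L_{n-1} = -ρ L_n` reduces coefficientwise to a binomial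
identity. Subtracting `L_n / y` on both sides turns the right-hand side into `-(1+yρ)/y · L_n`, so
the factor `(1+yρ)⁻¹` of the integrand cancels and the combination of the `I_{m,k}` is `-1/y` times
the orthogonality integral of `L_m` and `L_n`.

Orthogonality goes through the moments `∫ ρ^{α+k} e^{-ρ} L_n = Γ(α+n+1)/n! · Σ_j (-1)^j C(n,j)
(α+j+1)_k`: up to sign this is the `n`-th forward difference of a polynomial of degree `k` in `j`,
which vanishes for `k < n` and equals `n!` for `k = n`.
-/

open MeasureTheory Real Set

/-- Generalized Laguerre polynomial `L_n^{(α)}(x)`. -/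
noncomputable def genLaguerre (α : ℝ) (n : ℕ) (x : ℝ) : ℝ :=
  ∑ j ∈ Finset.range (n + 1),
    (-1 : ℝ) ^ j * (Real.Gamma (α + n + 1) /
      (Real.Gamma (α + j + 1) * (Nat.factorial (n - j)))) * x ^ j / (Nat.factorial j)

/-- The function `I_{m,n}^{(α,β)}(y)`. -/
noncomputable def Imn (α β y : ℝ) (m n : ℕ) : ℝ :=
  ∫ ρ in Ioi (0 : ℝ), (1 + y * ρ)⁻¹ * ρ ^ α * Real.exp (-ρ) *
    genLaguerre α m ρ * genLaguerre β n ρ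

open Polynomial Finset
open scoped Nat

theorem add_natCast_add_one_pos {α : ℝ} (hα : -1 < α) (i : ℕ) : 0 < α + i + 1 := by
  linarith [i.cast_nonneg (α := ℝ)]

theorem Real.Gamma_add_natCast_succ_add_one {α : ℝ} {k : ℕ} (h : α + k + 1 ≠ 0) :
    Gamma (α + (k + 1 : ℕ) + 1) = (α + k + 1) * Gamma (α + k + 1) := by
  rw [← Gamma_add_one h]
  push_cast
  ring_nf

theorem Real.Gamma_add_natCast {s : ℝ} (hs : 0 < s) (k : ℕ) :
    Gamma (s + k) = (ascPochhammer ℝ k).eval s * Gamma s := by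
  induction k with
  | zero => simp
  | succ k ih =>
    rw [Nat.cast_succ, ← add_assoc, Gamma_add_one (by positivity), ih, ascPochhammer_succ_eval]
    ring

theorem laguerre_choose_identity (α : ℝ) (n i : ℕ) :
    (α + n + 2) * (n + 2).choose (i + 1) - (2 * n + α + 3) * (n + 1).choose (i + 1)
      + (n + 1) * n.choose (i + 1) = (α + i + 1) * (n + 1).choose i := by
  have pascal : ((n + 2).choose (i + 1) : ℝ) = (n + 1).choose i + (n + 1).choose (i + 1) := by
    exact_mod_cast Nat.choose_succ_succ (n + 1) i
  have pascal₂ :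
      ((n + 2).choose (i + 2) : ℝ) = (n + 1).choose (i + 1) + (n + 1).choose (i + 2) := by
    exact_mod_cast Nat.choose_succ_succ (n + 1) (i + 1)
  have absorb₁ : ((n + 1 + 1) * (n + 1).choose i : ℝ) = (n + 2).choose (i + 1) * (i + 1) := by
    exact_mod_cast Nat.add_one_mul_choose_eq (n + 1) i
  have absorb₂ :
      ((n + 1 + 1) * (n + 1).choose (i + 1) : ℝ) = (n + 2).choose (i + 2) * (i + 1 + 1) := by
    exact_mod_cast Nat.add_one_mul_choose_eq (n + 1) (i + 1)
  have absorb₃ : ((n + 1) * n.choose (i + 1) : ℝ) = (n + 1).choose (i + 2) * (i + 1 + 1) := by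
    exact_mod_cast Nat.add_one_mul_choose_eq n (i + 1)
  linear_combination (α + n + i + 3) * pascal + absorb₃ - absorb₂ - (i + 2) * pascal₂ + absorb₁

theorem sum_neg_one_pow_mul_choose_mul_eval {R : Type*} [CommRing R] (P : R[X]) (n : ℕ) :
    ∑ j ∈ range (n + 1), (-1) ^ j * n.choose j * P.eval (j : R) =
      (-1) ^ n * (fwdDiff 1)^[n] P.eval 0 := by
  rw [fwdDiff_iter_eq_sum_shift, mul_sum]
  refine sum_congr rfl fun j hj => ?_
  obtain ⟨d, rfl⟩ := Nat.exists_eq_add_of_le (Nat.lt_succ_iff.mp (Finset.mem_range.mp hj))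
  simp only [Nat.add_sub_cancel_left, zsmul_eq_mul, nsmul_eq_mul, mul_one, zero_add]
  push_cast
  have hd : ((-1 : R) ^ d) * (-1) ^ d = 1 := by rw [← pow_add, ← two_mul, pow_mul]; simp
  rw [pow_add]
  linear_combination (-(-1 : R) ^ j * (j + d).choose j * P.eval (j : R)) * hd

theorem sum_neg_one_pow_mul_choose_mul_eval_of_natDegree_lt {R : Type*} [CommRing R] {P : R[X]}
    {n : ℕ} (hP : P.natDegree < n) :
    ∑ j ∈ range (n + 1), (-1) ^ j * n.choose j * P.eval (j : R) = 0 := by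
  rw [sum_neg_one_pow_mul_choose_mul_eval, Polynomial.fwdDiff_iter_eq_zero_of_degree_lt hP]
  simp

theorem Polynomial.Monic.sum_neg_one_pow_mul_choose_mul_eval {R : Type*} [CommRing R]
    {P : R[X]} (hP : P.Monic) :
    ∑ j ∈ range (P.natDegree + 1), (-1) ^ j * P.natDegree.choose j * P.eval (j : R) =
      (-1) ^ P.natDegree * P.natDegree ! := by
  rw [_root_.sum_neg_one_pow_mul_choose_mul_eval, Polynomial.fwdDiff_iter_degree_eq_factorial,
    hP.leadingCoeff]
  simp

-- The factor `n.choose j` makes `coeff_laguerrePoly` hold for every `j`, not only for `j ≤ n`.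
noncomputable def laguerrePoly (α : ℝ) (n : ℕ) : ℝ[X] :=
  ∑ j ∈ range (n + 1),
    C (Gamma (α + n + 1) / n ! * n.choose j * (-1) ^ j / Gamma (α + j + 1)) * X ^ j

theorem coeff_laguerrePoly (α : ℝ) (n j : ℕ) :
    (laguerrePoly α n).coeff j =
      Gamma (α + n + 1) / n ! * n.choose j * (-1) ^ j / Gamma (α + j + 1) := by
  rw [laguerrePoly, finsetSum_coeff]
  simp only [coeff_C_mul_X_pow, sum_ite_eq, Finset.mem_range]
  split_ifs with hj
  · rfl
  · simp [Nat.choose_eq_zero_of_lt (not_lt.mp hj)]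

theorem eval_laguerrePoly (α : ℝ) (n : ℕ) (x : ℝ) :
    (laguerrePoly α n).eval x = genLaguerre α n x := by
  rw [laguerrePoly, eval_finsetSum, genLaguerre]
  refine sum_congr rfl fun j hj => ?_
  rw [Nat.cast_choose ℝ (Nat.lt_succ_iff.mp (Finset.mem_range.mp hj))]
  simp only [eval_mul, eval_C, eval_pow, eval_X]
  field_simp

theorem laguerrePoly_recurrence {α : ℝ} (hα : -1 < α) (n : ℕ) :
    C ((n : ℝ) + 2) * laguerrePoly α (n + 2) =
      (C (2 * n + α + 3) - X) * laguerrePoly α (n + 1) - C (n + α + 1) * laguerrePoly α n := by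
  have hΓ₁ := Gamma_add_natCast_succ_add_one (add_natCast_add_one_pos hα n).ne'
  have hΓ₂ : Gamma (α + (n + 2 : ℕ) + 1) = (α + n + 2) * (α + n + 1) * Gamma (α + n + 1) := by
    rw [Gamma_add_natCast_succ_add_one (add_natCast_add_one_pos hα (n + 1)).ne', hΓ₁]
    push_cast
    ring
  have hf₁ : ((n + 1)! : ℝ) = (n + 1) * n ! := by push_cast [Nat.factorial_succ]; ring
  have hf₂ : ((n + 2)! : ℝ) = (n + 2) * (n + 1) * n ! := by push_cast [Nat.factorial_succ]; ring
  have hG := (Gamma_pos_of_pos (add_natCast_add_one_pos hα n)).ne'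
  ext (_ | i)
  · simp only [coeff_C_mul, coeff_sub, sub_mul, coeff_X_mul_zero, coeff_laguerrePoly,
      Nat.choose_zero_right]
    rw [hΓ₁, hΓ₂, hf₁, hf₂]
    field_simp
    push_cast
    ring
  · simp only [coeff_C_mul, coeff_sub, sub_mul, coeff_X_mul, coeff_laguerrePoly]
    have hi := (add_natCast_add_one_pos hα i).ne'
    rw [hΓ₁, hΓ₂, hf₁, hf₂, Gamma_add_natCast_succ_add_one hi, pow_succ]
    have hGi := (Gamma_pos_of_pos (add_natCast_add_one_pos hα i)).ne'
    field_simp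
    linear_combination -(α + n + 1) * laguerre_choose_identity α n i

theorem genLaguerre_recurrence {α : ℝ} (hα : -1 < α) (n : ℕ) (x : ℝ) :
    ((n : ℝ) + 2) * genLaguerre α (n + 2) x =
      (2 * n + α + 3 - x) * genLaguerre α (n + 1) x - (n + α + 1) * genLaguerre α n x := by
  simpa only [eval_mul, eval_sub, eval_C, eval_X, eval_laguerrePoly] using
    congrArg (eval x) (laguerrePoly_recurrence hα n)

-- The functional `P ↦ ∫₀^∞ ρ^α e^{-ρ} P(ρ) dρ`, given on monomials by the Gamma integral.
noncomputable def gammaMoment (α : ℝ) : ℝ[X] →ₗ[ℝ] ℝ :=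
  lsum fun i => Gamma (α + i + 1) • LinearMap.id

theorem gammaMoment_monomial (α : ℝ) (i : ℕ) (a : ℝ) :
    gammaMoment α (monomial i a) = a * Gamma (α + i + 1) := by
  simp [gammaMoment, mul_comm]

theorem rpow_mul_exp_neg_mul_pow_eqOn (α : ℝ) (i : ℕ) :
    EqOn (fun ρ : ℝ => ρ ^ α * rexp (-ρ) * ρ ^ i) (fun ρ => rexp (-ρ) * ρ ^ (α + i + 1 - 1))
      (Ioi 0) := fun ρ hρ => by
  simp only [add_sub_cancel_right, rpow_add_natCast (ne_of_gt hρ)]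
  ring

theorem integrableOn_rpow_mul_exp_neg_mul_pow {α : ℝ} (hα : -1 < α) (i : ℕ) :
    IntegrableOn (fun ρ : ℝ => ρ ^ α * rexp (-ρ) * ρ ^ i) (Ioi 0) :=
  (GammaIntegral_convergent (add_natCast_add_one_pos hα i)).congr_fun
    (rpow_mul_exp_neg_mul_pow_eqOn α i).symm measurableSet_Ioi

theorem integral_rpow_mul_exp_neg_mul_pow {α : ℝ} (hα : -1 < α) (i : ℕ) :
    ∫ ρ in Ioi 0, ρ ^ α * rexp (-ρ) * ρ ^ i = Gamma (α + i + 1) := by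
  rw [Gamma_eq_integral (add_natCast_add_one_pos hα i)]
  exact setIntegral_congr_fun measurableSet_Ioi (rpow_mul_exp_neg_mul_pow_eqOn α i)

theorem integrableOn_rpow_mul_exp_neg_mul_eval {α : ℝ} (hα : -1 < α) (P : ℝ[X]) :
    IntegrableOn (fun ρ : ℝ => ρ ^ α * rexp (-ρ) * P.eval ρ) (Ioi 0) := by
  induction P using Polynomial.induction_on' with
  | add P Q hP hQ =>
    simp only [eval_add, mul_add]
    exact hP.add hQ
  | monomial i a =>
    simp only [eval_monomial, mul_left_comm _ a]
    exact (integrableOn_rpow_mul_exp_neg_mul_pow hα i).const_mul a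

theorem integral_rpow_mul_exp_neg_mul_eval {α : ℝ} (hα : -1 < α) (P : ℝ[X]) :
    ∫ ρ in Ioi 0, ρ ^ α * rexp (-ρ) * P.eval ρ = gammaMoment α P := by
  induction P using Polynomial.induction_on' with
  | add P Q hP hQ =>
    simp only [eval_add, mul_add, map_add]
    rw [integral_add (integrableOn_rpow_mul_exp_neg_mul_eval hα P)
      (integrableOn_rpow_mul_exp_neg_mul_eval hα Q), hP, hQ]
  | monomial i a =>
    simp only [eval_monomial, mul_left_comm _ a, integral_const_mul,
      integral_rpow_mul_exp_neg_mul_pow hα, gammaMoment_monomial]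

theorem gammaMoment_X_pow_mul_laguerrePoly {α : ℝ} (hα : -1 < α) (k n : ℕ) :
    gammaMoment α (X ^ k * laguerrePoly α n) = Gamma (α + n + 1) / n ! *
      ∑ j ∈ range (n + 1), (-1) ^ j * n.choose j *
        ((ascPochhammer ℝ k).comp (X + C (α + 1))).eval (j : ℝ) := by
  rw [laguerrePoly, mul_sum, map_sum, mul_sum]
  refine sum_congr rfl fun j _ => ?_
  have hshift : Gamma (α + (k + j : ℕ) + 1) =
      (ascPochhammer ℝ k).eval (α + j + 1) * Gamma (α + j + 1) := by
    rw [← Gamma_add_natCast (add_natCast_add_one_pos hα j)]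
    push_cast
    ring_nf
  rw [mul_left_comm, ← pow_add, C_mul_X_pow_eq_monomial, gammaMoment_monomial, hshift]
  have hG := (Gamma_pos_of_pos (add_natCast_add_one_pos hα j)).ne'
  simp only [eval_comp, eval_add, eval_X, eval_C, add_left_comm (j : ℝ), ← add_assoc]
  field_simp

theorem gammaMoment_X_pow_mul_laguerrePoly_of_lt {α : ℝ} (hα : -1 < α) {k n : ℕ} (hk : k < n) :
    gammaMoment α (X ^ k * laguerrePoly α n) = 0 := by
  rw [gammaMoment_X_pow_mul_laguerrePoly hα, sum_neg_one_pow_mul_choose_mul_eval_of_natDegree_lt,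
    mul_zero]
  rwa [natDegree_comp, ascPochhammer_natDegree, natDegree_X_add_C, mul_one]

theorem gammaMoment_X_pow_mul_laguerrePoly_self {α : ℝ} (hα : -1 < α) (n : ℕ) :
    gammaMoment α (X ^ n * laguerrePoly α n) = (-1) ^ n * Gamma (α + n + 1) := by
  have hmonic : ((ascPochhammer ℝ n).comp (X + C (α + 1))).Monic :=
    (monic_ascPochhammer ℝ n).comp_X_add_C _
  have hdeg : ((ascPochhammer ℝ n).comp (X + C (α + 1))).natDegree = n := by
    rw [natDegree_comp, ascPochhammer_natDegree, natDegree_X_add_C, mul_one]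
  have hsum := hmonic.sum_neg_one_pow_mul_choose_mul_eval
  rw [hdeg] at hsum
  rw [gammaMoment_X_pow_mul_laguerrePoly hα, hsum]
  field_simp

theorem gammaMoment_laguerrePoly_mul (α : ℝ) (m : ℕ) (Q : ℝ[X]) :
    gammaMoment α (laguerrePoly α m * Q) = ∑ k ∈ range (m + 1),
      Gamma (α + m + 1) / m ! * m.choose k * (-1) ^ k / Gamma (α + k + 1) *
        gammaMoment α (X ^ k * Q) := by
  simp only [laguerrePoly, sum_mul, ← smul_eq_C_mul, smul_mul_assoc, map_sum, map_smul,
    smul_eq_mul]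

theorem gammaMoment_laguerrePoly_mul_laguerrePoly_of_lt {α : ℝ} (hα : -1 < α) {m n : ℕ}
    (hmn : m < n) : gammaMoment α (laguerrePoly α m * laguerrePoly α n) = 0 := by
  rw [gammaMoment_laguerrePoly_mul]
  refine sum_eq_zero fun k hk => ?_
  rw [gammaMoment_X_pow_mul_laguerrePoly_of_lt hα ((Finset.mem_range.mp hk).trans_le hmn),
    mul_zero]

theorem gammaMoment_laguerrePoly_mul_self {α : ℝ} (hα : -1 < α) (n : ℕ) :
    gammaMoment α (laguerrePoly α n * laguerrePoly α n) = Gamma (α + n + 1) / n ! := by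
  rw [gammaMoment_laguerrePoly_mul, sum_range_succ, sum_eq_zero fun k hk => by
    rw [gammaMoment_X_pow_mul_laguerrePoly_of_lt hα (Finset.mem_range.mp hk), mul_zero],
    gammaMoment_X_pow_mul_laguerrePoly_self hα, Nat.choose_self, zero_add, Nat.cast_one, mul_one]
  have hG := (Gamma_pos_of_pos (add_natCast_add_one_pos hα n)).ne'
  have hsign : ((-1 : ℝ) ^ n) ^ 2 = 1 := by rw [← pow_mul, mul_comm, pow_mul, neg_one_sq, one_pow]
  field_simp
  rw [hsign]

theorem gammaMoment_laguerrePoly_mul_laguerrePoly {α : ℝ} (hα : -1 < α) (m n : ℕ) :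
    gammaMoment α (laguerrePoly α m * laguerrePoly α n) =
      if m = n then Gamma (α + n + 1) / n ! else 0 := by
  rcases lt_trichotomy m n with hmn | rfl | hnm
  · rw [gammaMoment_laguerrePoly_mul_laguerrePoly_of_lt hα hmn, if_neg hmn.ne]
  · rw [gammaMoment_laguerrePoly_mul_self hα, if_pos rfl]
  · rw [mul_comm, gammaMoment_laguerrePoly_mul_laguerrePoly_of_lt hα hnm, if_neg hnm.ne']

theorem integral_genLaguerre_mul_genLaguerre {α : ℝ} (hα : -1 < α) (m n : ℕ) :
    ∫ ρ in Ioi 0, ρ ^ α * rexp (-ρ) * genLaguerre α m ρ * genLaguerre α n ρ =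
      if m = n then Gamma (α + n + 1) / n ! else 0 := by
  simp only [← eval_laguerrePoly, mul_assoc, ← eval_mul]
  rw [← gammaMoment_laguerrePoly_mul_laguerrePoly hα, ← integral_rpow_mul_exp_neg_mul_eval hα]
  simp only [mul_assoc]

theorem integrableOn_Imn_integrand {α y : ℝ} (hα : -1 < α) (hy : 0 ≤ y) (m n : ℕ) :
    IntegrableOn (fun ρ => (1 + y * ρ)⁻¹ * ρ ^ α * rexp (-ρ) *
      genLaguerre α m ρ * genLaguerre α n ρ) (Ioi 0) := by
  have hbound : ∀ᵐ ρ ∂volume.restrict (Ioi (0 : ℝ)), ‖(1 + y * ρ)⁻¹‖ ≤ 1 := by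
    refine ae_restrict_of_forall_mem measurableSet_Ioi fun ρ (hρ : 0 < ρ) => ?_
    rw [norm_inv, Real.norm_of_nonneg (by positivity)]
    exact inv_le_one_of_one_le₀ (by nlinarith)
  have : IntegrableOn (fun ρ => (1 + y * ρ)⁻¹ *
      (ρ ^ α * rexp (-ρ) * (laguerrePoly α m * laguerrePoly α n).eval ρ)) (Ioi 0) :=
    (integrableOn_rpow_mul_exp_neg_mul_eval hα _).bdd_mul (by fun_prop) hbound
  refine this.congr_fun (fun ρ _ => ?_) measurableSet_Ioi
  simp only [eval_mul, eval_laguerrePoly]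
  ring

theorem genLaguerre_recurrence_div_one_add_mul {α y x : ℝ} (hα : -1 < α) (hy : y ≠ 0)
    (hx : 1 + y * x ≠ 0) (n : ℕ) :
    (1 + y * x)⁻¹ * (((n : ℝ) + 2) * genLaguerre α (n + 2) x
      - (2 * n + α + 3 + 1 / y) * genLaguerre α (n + 1) x + (n + α + 1) * genLaguerre α n x) =
        -(1 / y) * genLaguerre α (n + 1) x := by
  rw [genLaguerre_recurrence hα n x]
  field_simp
  ring

theorem Imn_three_term_recurrence (α y : ℝ) (hα : -1 < α) (hy : 0 < y)
    (m n : ℕ) (hn : 1 ≤ n) :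
    ((n : ℝ) + 1) * Imn α α y m (n + 1) - (2 * n + α + 1 + 1 / y) * Imn α α y m n +
        ((n : ℝ) + α) * Imn α α y m (n - 1) =
      -(1 / y) * (Real.Gamma (α + n + 1) / (Nat.factorial n)) * (if m = n then 1 else 0) := by
  obtain ⟨p, rfl⟩ : ∃ p, n = p + 1 := ⟨n - 1, by omega⟩
  set F : ℕ → ℝ → ℝ := fun k ρ =>
    (1 + y * ρ)⁻¹ * ρ ^ α * rexp (-ρ) * genLaguerre α m ρ * genLaguerre α k ρ
  have hF : ∀ k, IntegrableOn (F k) (Ioi 0) := integrableOn_Imn_integrand hα hy.le m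
  have hpoint : ∀ ρ ∈ Ioi (0 : ℝ),
      ((p : ℝ) + 2) * F (p + 2) ρ - (2 * p + α + 3 + 1 / y) * F (p + 1) ρ + (p + α + 1) * F p ρ =
        -(1 / y) * (ρ ^ α * rexp (-ρ) * genLaguerre α m ρ * genLaguerre α (p + 1) ρ) := by
    intro ρ (hρ : 0 < ρ)
    simp only [F]
    linear_combination ρ ^ α * rexp (-ρ) * genLaguerre α m ρ *
      genLaguerre_recurrence_div_one_add_mul (x := ρ) hα hy.ne' (by positivity) p
  calc _ = ∫ ρ in Ioi 0, ((p : ℝ) + 2) * F (p + 2) ρ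
        - (2 * p + α + 3 + 1 / y) * F (p + 1) ρ + (p + α + 1) * F p ρ := by
        rw [integral_add ?_ ((hF _).const_mul _), integral_sub ((hF _).const_mul _)
          ((hF _).const_mul _), integral_const_mul, integral_const_mul, integral_const_mul]
        · simp only [Imn, F]
          push_cast
          ring_nf
        · exact ((hF _).const_mul _).sub ((hF _).const_mul _)
    _ = _ := by
      rw [setIntegral_congr_fun measurableSet_Ioi hpoint, integral_const_mul,
        integral_genLaguerre_mul_genLaguerre hα]
      split_ifs <;> simp
end

section
/- For real α > 0 and y > 0: Σ_{m=0}^∞ (m! / (α+1)_m) · I_{0,m}(y) = Γ(α+1) - α y · I_{0,0}(y), where I_{0,m}(y) = ∫_0^∞ (1+yρ)^{-1} ρ^α e^{-ρ} L_m^{(α)}(ρ) dρ and (α+1)_m is the Pochhammer symbol. -/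
/-!
Write `(1 + yρ)⁻¹ = ∫₀^∞ e^{-(1 + yρ)t} dt` and exchange the integrals. With `s = 1 + ty`, the inner
integral is the Laplace transform of `ρ^α e^{-ρ} L_m^{(α)}(ρ)` at `s`, namely
`Γ(α + m + 1)/m! · (1 - s⁻¹)^m s^{-(α+1)}`. Hence the `m`-th term of the series is
`Γ(α + 1) ∫₀^∞ e^{-t} (1 - s⁻¹)^m s^{-(α+1)} dt`; these integrands are nonnegative, so the
geometric series in `1 - s⁻¹` may be summed under the integral, giving
`Γ(α + 1) ∫₀^∞ e^{-t} s^{-α} dt`. Integrating by parts, this is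
`Γ(α + 1) (1 - αy ∫₀^∞ e^{-t} s^{-(α+1)} dt)`, and the last integral is `I_{0,0}(y) / Γ(α + 1)`.
-/

open MeasureTheory Real Set

lemma integrableOn_rpow_mul_exp_neg_mul {β s : ℝ} (hβ : -1 < β) (hs : 0 < s) :
    IntegrableOn (fun ρ : ℝ => ρ ^ β * exp (-(s * ρ))) (Ioi 0) := by
  simpa only [rpow_one, neg_mul] using integrableOn_rpow_mul_exp_neg_mul_rpow hβ one_pos hs

lemma integral_rpow_mul_exp_neg_mul {β s : ℝ} (hβ : -1 < β) (hs : 0 < s) :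
    ∫ ρ in Ioi 0, ρ ^ β * exp (-(s * ρ)) = Gamma (β + 1) * s ^ (-(β + 1)) := by
  have h := integral_rpow_mul_exp_neg_mul_Ioi (a := β + 1) (by linarith) hs
  rw [add_sub_cancel_right] at h
  rw [h, one_div, inv_rpow hs.le, rpow_neg hs.le, mul_comm]

lemma integral_inv_one_add_mul_mul {f : ℝ → ℝ} (hf : IntegrableOn f (Ioi 0)) {y : ℝ}
    (hy : 0 ≤ y) :
    ∫ ρ in Ioi 0, (1 + y * ρ)⁻¹ * f ρ
      = ∫ t in Ioi 0, exp (-t) * ∫ ρ in Ioi 0, exp (-(t * y * ρ)) * f ρ := by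
  have hu : ∀ ρ ∈ Ioi (0 : ℝ), 1 ≤ 1 + y * ρ := fun ρ hρ =>
    le_add_of_nonneg_right (mul_nonneg hy (le_of_lt hρ))
  have hpos : ∀ ρ ∈ Ioi (0 : ℝ), 0 < 1 + y * ρ := fun ρ hρ => zero_lt_one.trans_le (hu ρ hρ)
  have hinv : ∀ ρ ∈ Ioi (0 : ℝ), (1 + y * ρ)⁻¹ = ∫ t in Ioi 0, exp (-(1 + y * ρ) * t) :=
    fun ρ hρ => by
      rw [integral_exp_mul_Ioi (neg_lt_zero.mpr (hpos ρ hρ)), mul_zero, exp_zero, div_neg,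
        neg_div, neg_neg, one_div]
  set F : ℝ → ℝ → ℝ := fun ρ t => exp (-(1 + y * ρ) * t) * f ρ with hF_def
  have hF : Integrable (Function.uncurry F)
      ((volume.restrict (Ioi 0)).prod (volume.restrict (Ioi 0))) := by
    have hmeas : AEStronglyMeasurable (Function.uncurry F)
        ((volume.restrict (Ioi 0)).prod (volume.restrict (Ioi 0))) :=
      (Continuous.aestronglyMeasurable (by fun_prop)).mul hf.aestronglyMeasurable.comp_fst
    rw [integrable_prod_iff hmeas]
    refine ⟨?_, hf.norm.mono' hmeas.norm.integral_prod_right' ?_⟩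
    · filter_upwards [ae_restrict_mem measurableSet_Ioi] with ρ hρ
      exact (exp_neg_integrableOn_Ioi 0 (hpos ρ hρ)).mul_const (f ρ)
    · filter_upwards [ae_restrict_mem measurableSet_Ioi] with ρ hρ
      have hnorm : ∫ t in Ioi 0, ‖Function.uncurry F (ρ, t)‖ = (1 + y * ρ)⁻¹ * ‖f ρ‖ := by
        simp only [Function.uncurry_apply_pair, hF_def, norm_mul, norm_of_nonneg (exp_pos _).le]
        rw [integral_mul_const, hinv ρ hρ]
      rw [hnorm, norm_of_nonneg (by positivity [(hpos ρ hρ).le])]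
      exact mul_le_of_le_one_left (norm_nonneg _) (inv_le_one_of_one_le₀ (hu ρ hρ))
  calc ∫ ρ in Ioi 0, (1 + y * ρ)⁻¹ * f ρ = ∫ ρ in Ioi 0, ∫ t in Ioi 0, F ρ t :=
        setIntegral_congr_fun measurableSet_Ioi fun ρ hρ => by
          rw [hinv ρ hρ, ← integral_mul_const]
    _ = ∫ t in Ioi 0, ∫ ρ in Ioi 0, F ρ t := integral_integral_swap hF
    _ = _ := by
        congr 1 with t
        rw [← integral_const_mul]
        congr 1 with ρ
        rw [hF_def, ← mul_assoc, ← exp_add]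
        ring_nf

lemma hasSum_integral_of_nonneg_of_hasSum {ι X : Type*} [Countable ι] [MeasurableSpace X]
    {μ : Measure X} {F : ι → X → ℝ} {f : X → ℝ} (hF : ∀ i, AEStronglyMeasurable (F i) μ)
    (hF_nonneg : ∀ i, 0 ≤ᵐ[μ] F i) (hf : Integrable f μ)
    (hsum : ∀ᵐ x ∂μ, HasSum (fun i => F i x) (f x)) :
    HasSum (fun i => ∫ x, F i x ∂μ) (∫ x, f x ∂μ) := by
  refine hasSum_integral_of_dominated_convergence F hF (fun i => ?_)
    (hsum.mono fun x hx => hx.summable) (hf.congr ?_) hsum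
  · filter_upwards [hF_nonneg i] with x hx using (norm_of_nonneg hx).le
  · filter_upwards [hsum] with x hx using hx.tsum_eq.symm

lemma integrableOn_exp_neg_mul_rpow_neg {y γ : ℝ} (hy : 0 ≤ y) (hγ : 0 ≤ γ) :
    IntegrableOn (fun t => exp (-t) * (1 + t * y) ^ (-γ)) (Ioi 0) := by
  refine (exp_neg_integrableOn_Ioi 0 one_pos).mono' (by fun_prop) ?_
  filter_upwards [ae_restrict_mem measurableSet_Ioi] with t ht
  have hu : 1 ≤ 1 + t * y := le_add_of_nonneg_right (mul_nonneg (le_of_lt ht) hy)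
  rw [norm_of_nonneg (by positivity), neg_one_mul]
  exact mul_le_of_le_one_right (exp_pos _).le
    (rpow_le_one_of_one_le_of_nonpos hu (neg_nonpos.mpr hγ))

lemma integral_exp_neg_mul_rpow_neg {y γ : ℝ} (hy : 0 ≤ y) (hγ : 0 ≤ γ) :
    ∫ t in Ioi 0, exp (-t) * (1 + t * y) ^ (-γ)
      = 1 - γ * y * ∫ t in Ioi 0, exp (-t) * (1 + t * y) ^ (-(γ + 1)) := by
  have hu : ∀ t ∈ Ici (0 : ℝ), 1 ≤ 1 + t * y := fun t ht =>
    le_add_of_nonneg_right (mul_nonneg (mem_Ici.mp ht) hy)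
  have hderiv : ∀ t ∈ Ici (0 : ℝ), HasDerivAt (fun t => -(exp (-t) * (1 + t * y) ^ (-γ)))
      (exp (-t) * (1 + t * y) ^ (-γ) + γ * y * (exp (-t) * (1 + t * y) ^ (-(γ + 1)))) t := by
    intro t ht
    have hlin : HasDerivAt (fun t => 1 + t * y) y t := by
      simpa using ((hasDerivAt_id t).mul_const y).const_add 1
    have hpow := hlin.rpow_const (p := -γ) (Or.inl (by linarith [hu t ht]))
    refine ((hasDerivAt_neg t).exp.mul hpow).neg.congr_deriv ?_
    rw [show -γ - 1 = -(γ + 1) by ring]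
    ring
  have hint := (integrableOn_exp_neg_mul_rpow_neg hy hγ).add
    ((integrableOn_exp_neg_mul_rpow_neg hy (by linarith : 0 ≤ γ + 1)).const_mul (γ * y))
  have hlim :
      Filter.Tendsto (fun t => -(exp (-t) * (1 + t * y) ^ (-γ))) Filter.atTop (nhds 0) := by
    refine squeeze_zero_norm' ?_ tendsto_exp_neg_atTop_nhds_zero
    filter_upwards [Filter.eventually_ge_atTop 0] with t ht
    rw [norm_neg, norm_of_nonneg (by have := hu t ht; positivity)]
    exact mul_le_of_le_one_right (exp_pos _).le
      (rpow_le_one_of_one_le_of_nonpos (hu t ht) (neg_nonpos.mpr hγ))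
  have hFTC := integral_Ioi_of_hasDerivAt_of_tendsto' hderiv hint hlim
  rw [integral_add (integrableOn_exp_neg_mul_rpow_neg hy hγ)
    ((integrableOn_exp_neg_mul_rpow_neg hy (by linarith)).const_mul _), integral_const_mul] at hFTC
  simp only [neg_zero, exp_zero, zero_mul, add_zero, one_rpow, mul_one, sub_neg_eq_add,
    zero_add] at hFTC
  linarith

lemma hasSum_one_sub_inv_pow_mul_rpow {u : ℝ} (hu : 1 ≤ u) (γ : ℝ) :
    HasSum (fun m : ℕ => (1 - u⁻¹) ^ m * u ^ (-(γ + 1))) (u ^ (-γ)) := by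
  have hu0 : 0 < u := by linarith
  have hgeom := hasSum_geometric_of_lt_one (r := 1 - u⁻¹)
    (sub_nonneg.mpr (inv_le_one_of_one_le₀ hu)) (sub_lt_self 1 (inv_pos.mpr hu0))
  rw [sub_sub_cancel, inv_inv] at hgeom
  have hexp : u * u ^ (-(γ + 1)) = u ^ (-γ) := by
    nth_rewrite 1 [← rpow_one u]
    rw [← rpow_add hu0]
    ring_nf
  simpa only [hexp] using hgeom.mul_right (u ^ (-(γ + 1)))

namespace genLaguerre

noncomputable def coeff (α : ℝ) (m j : ℕ) : ℝ :=
  (-1) ^ j * (Gamma (α + m + 1) / (Gamma (α + j + 1) * (m - j).factorial)) / j.factorial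

lemma eq_sum_coeff (α : ℝ) (m : ℕ) (x : ℝ) :
    genLaguerre α m x = ∑ j ∈ Finset.range (m + 1), coeff α m j * x ^ j := by
  refine Finset.sum_congr rfl fun j _ => ?_
  rw [coeff]
  ring

lemma sum_coeff_mul_Gamma_mul_pow {α : ℝ} (hα : -1 < α) (m : ℕ) (x : ℝ) :
    ∑ j ∈ Finset.range (m + 1), coeff α m j * Gamma (α + j + 1) * x ^ j
      = Gamma (α + m + 1) / m.factorial * (1 - x) ^ m := by
  have hterm : ∀ j ∈ Finset.range (m + 1), coeff α m j * Gamma (α + j + 1) * x ^ j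
      = Gamma (α + m + 1) / m.factorial * ((-x) ^ j * 1 ^ (m - j) * m.choose j) := by
    intro j hj
    have hjm : j ≤ m := Nat.lt_succ_iff.mp (Finset.mem_range.mp hj)
    have hΓ : Gamma (α + j + 1) ≠ 0 :=
      (Gamma_pos_of_pos (by linarith [j.cast_nonneg (α := ℝ)])).ne'
    have hchoose : (m.choose j : ℝ) = m.factorial / (j.factorial * (m - j).factorial) := by
      rw [Nat.cast_choose ℝ hjm]
    rw [coeff, hchoose, neg_pow x, one_pow]
    field_simp
  rw [Finset.sum_congr rfl hterm, ← Finset.mul_sum, ← add_pow, neg_add_eq_sub]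

lemma rpow_mul_exp_mul_eq_sum {α : ℝ} (m : ℕ) {ρ : ℝ} (hρ : 0 < ρ) (c : ℝ) :
    ρ ^ α * exp c * genLaguerre α m ρ
      = ∑ j ∈ Finset.range (m + 1), coeff α m j * (ρ ^ (α + j) * exp c) := by
  rw [eq_sum_coeff, Finset.mul_sum]
  refine Finset.sum_congr rfl fun j _ => ?_
  rw [rpow_add hρ, rpow_natCast]
  ring

lemma integrableOn_rpow_mul_exp_neg_mul {α s : ℝ} (hα : -1 < α) (hs : 0 < s) (m : ℕ) :
    IntegrableOn (fun ρ : ℝ => ρ ^ α * exp (-(s * ρ)) * genLaguerre α m ρ) (Ioi 0) := by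
  refine IntegrableOn.congr_fun ?_ (fun ρ hρ => (rpow_mul_exp_mul_eq_sum m hρ _).symm)
    measurableSet_Ioi
  refine integrable_finsetSum _ fun j _ => Integrable.const_mul ?_ _
  exact _root_.integrableOn_rpow_mul_exp_neg_mul (by linarith [j.cast_nonneg (α := ℝ)]) hs

theorem integral_rpow_mul_exp_neg_mul {α s : ℝ} (hα : -1 < α) (hs : 0 < s) (m : ℕ) :
    ∫ ρ in Ioi 0, ρ ^ α * exp (-(s * ρ)) * genLaguerre α m ρ
      = Gamma (α + m + 1) / m.factorial * ((1 - s⁻¹) ^ m * s ^ (-(α + 1))) := by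
  have hβ : ∀ j : ℕ, -1 < α + j := fun j => by linarith [j.cast_nonneg (α := ℝ)]
  have hpow : ∀ j : ℕ, s ^ (-(α + j + 1)) = s ^ (-(α + 1)) * s⁻¹ ^ j := fun j => by
    rw [show -(α + j + 1) = -(α + 1) + -(j : ℝ) by ring, rpow_add hs, rpow_neg hs.le j,
      rpow_natCast, inv_pow]
  calc ∫ ρ in Ioi 0, ρ ^ α * exp (-(s * ρ)) * genLaguerre α m ρ
      = ∫ ρ in Ioi 0,
          ∑ j ∈ Finset.range (m + 1), coeff α m j * (ρ ^ (α + j) * exp (-(s * ρ))) :=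
        setIntegral_congr_fun measurableSet_Ioi fun ρ hρ => rpow_mul_exp_mul_eq_sum m hρ _
    _ = ∑ j ∈ Finset.range (m + 1), coeff α m j * (Gamma (α + j + 1) * s ^ (-(α + j + 1))) := by
        rw [integral_finsetSum _ fun j _ =>
          (_root_.integrableOn_rpow_mul_exp_neg_mul (hβ j) hs).const_mul _]
        simp only [integral_const_mul, _root_.integral_rpow_mul_exp_neg_mul (hβ _) hs]
    _ = s ^ (-(α + 1)) *
          ∑ j ∈ Finset.range (m + 1), coeff α m j * Gamma (α + j + 1) * s⁻¹ ^ j := by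
        rw [Finset.mul_sum]
        refine Finset.sum_congr rfl fun j _ => ?_
        rw [hpow]
        ring
    _ = _ := by
        rw [sum_coeff_mul_Gamma_mul_pow hα]
        ring

end genLaguerre

lemma genLaguerre_zero {α : ℝ} (hα : Gamma (α + 1) ≠ 0) (x : ℝ) : genLaguerre α 0 x = 1 := by
  simp [genLaguerre, hα]

lemma Imn_zero_eq_integral {α y : ℝ} (hα : -1 < α) (hy : 0 ≤ y) (m : ℕ) :
    Imn α α y 0 m = Gamma (α + m + 1) / m.factorial *
      ∫ t in Ioi 0, exp (-t) * ((1 - (1 + t * y)⁻¹) ^ m * (1 + t * y) ^ (-(α + 1))) := by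
  have hΓ : Gamma (α + 1) ≠ 0 := (Gamma_pos_of_pos (by linarith)).ne'
  have hL := genLaguerre.integrableOn_rpow_mul_exp_neg_mul hα one_pos m
  simp only [one_mul] at hL
  calc Imn α α y 0 m
      = ∫ ρ in Ioi 0, (1 + y * ρ)⁻¹ * (ρ ^ α * exp (-ρ) * genLaguerre α m ρ) := by
        simp only [Imn, genLaguerre_zero hΓ, mul_one, mul_assoc]
    _ = ∫ t in Ioi 0, exp (-t) *
          ∫ ρ in Ioi 0, ρ ^ α * exp (-((1 + t * y) * ρ)) * genLaguerre α m ρ := by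
        rw [integral_inv_one_add_mul_mul hL hy]
        congr 1 with t
        congr 2 with ρ
        rw [show -((1 + t * y) * ρ) = -(t * y * ρ) + -ρ by ring, exp_add]
        ring
    _ = _ := by
        rw [← integral_const_mul]
        refine setIntegral_congr_fun measurableSet_Ioi fun t ht => ?_
        have hs : 0 < 1 + t * y := add_pos_of_pos_of_nonneg one_pos (mul_nonneg (le_of_lt ht) hy)
        rw [genLaguerre.integral_rpow_mul_exp_neg_mul hα hs]
        ring

theorem Imn_sum_single (α y : ℝ) (hα : 0 < α) (hy : 0 < y) :
    (∑' m : ℕ, ((Nat.factorial m : ℝ) * Real.Gamma (α + 1) / Real.Gamma (α + 1 + m)) *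
        Imn α α y 0 m) =
      Real.Gamma (α + 1) - α * y * Imn α α y 0 0 := by
  set g : ℕ → ℝ → ℝ := fun m t =>
    exp (-t) * ((1 - (1 + t * y)⁻¹) ^ m * (1 + t * y) ^ (-(α + 1)))
  have hterm : ∀ m : ℕ, (m.factorial * Gamma (α + 1) / Gamma (α + 1 + m)) * Imn α α y 0 m
      = Gamma (α + 1) * ∫ t in Ioi 0, g m t := fun m => by
    have hΓ : Gamma (α + m + 1) ≠ 0 := (Gamma_pos_of_pos (by positivity)).ne'
    rw [Imn_zero_eq_integral (by linarith) hy.le, add_right_comm, ← mul_assoc]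
    congr 1
    field_simp
  have hu : ∀ t ∈ Ioi (0 : ℝ), 1 ≤ 1 + t * y := fun t ht =>
    le_add_of_nonneg_right (mul_nonneg (le_of_lt ht) hy.le)
  have hsum : HasSum (fun m => ∫ t in Ioi 0, g m t)
      (∫ t in Ioi 0, exp (-t) * (1 + t * y) ^ (-α)) := by
    refine hasSum_integral_of_nonneg_of_hasSum (fun m => by fun_prop) (fun m => ?_)
      (integrableOn_exp_neg_mul_rpow_neg hy.le hα.le) ?_
    · filter_upwards [ae_restrict_mem measurableSet_Ioi] with t ht
      have hr : 0 ≤ 1 - (1 + t * y)⁻¹ := sub_nonneg.mpr (inv_le_one_of_one_le₀ (hu t ht))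
      exact mul_nonneg (exp_pos _).le
        (mul_nonneg (pow_nonneg hr m) (rpow_nonneg (zero_le_one.trans (hu t ht)) _))
    · filter_upwards [ae_restrict_mem measurableSet_Ioi] with t ht
      exact (hasSum_one_sub_inv_pow_mul_rpow (hu t ht) α).mul_left (exp (-t))
  have hI₀₀ : Imn α α y 0 0
      = Gamma (α + 1) * ∫ t in Ioi 0, exp (-t) * (1 + t * y) ^ (-(α + 1)) := by
    simpa using Imn_zero_eq_integral (by linarith) hy.le 0
  rw [tsum_congr hterm, tsum_mul_left, hsum.tsum_eq, integral_exp_neg_mul_rpow_neg hy.le hα.le,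
    hI₀₀]
  ring
end

section
/- For real α > -1, y > 0, ω ∈ ℝ, and a natural number n > 0, with Ŝ_n^m defined as in the context: (α+1) Ŝ_n^1 = (α + 1 + 1/y) Ŝ_n^0 - 1/y. -/
open MeasureTheory Real Set

/-- The normalized function Ī_(m,n)^(α,β)(y). -/
noncomputable def Ibar (α β y : ℝ) (m n : ℕ) : ℝ :=
  ((Nat.factorial m : ℝ) / Real.Gamma (m + α + 1)) * Imn α β y m n

/-- The function Ŝ_n^m(y) = Ī_(m,n)^(α,α+1)(y) - ω y Ī_(m,n)^(α,α)(y). -/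
noncomputable def Shat (α y ω : ℝ) (m n : ℕ) : ℝ :=
  Ibar α (α + 1) y m n - ω * y * Ibar α α y m n

/-
Since `L_1^{(α)}(ρ) = α + 1 - ρ` and `ρ / (1 + yρ) = (1 - 1 / (1 + yρ)) / y`, the integral
`I_{1,n}` is `(α + 1 + 1/y) I_{0,n}` minus `1/y` times the plain moment `∫ ρ^α e^{-ρ} L_n^{(β)}`.
Expanding `L_n^{(β)}` in monomials turns this moment into an alternating binomial sum of Gamma
values: for `β = α` and `n > 0` it is a multiple of `∑ (-1)^j C(n,j) = 0`, and for `β = α + 1`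
it is a multiple of `∑ (-1)^j C(n,j) / (α + 1 + j)`, which evaluates to exactly `Γ(α + 1)`.
-/

open Finset Nat

/-- The Beta integral `B(x, n + 1)`, with `(1 - t)^n` expanded binomially. -/
theorem sum_range_alternating_choose_div {x : ℝ} (hx : 0 < x) (n : ℕ) :
    ∑ j ∈ range (n + 1), (-1 : ℝ) ^ j * n.choose j / (x + j) =
      n ! * Gamma x / Gamma (x + n + 1) := by
  induction n generalizing x with
  | zero => simp [Gamma_add_one hx.ne', div_mul_cancel_right₀ (Gamma_pos_of_pos hx).ne']
  | succ n ih =>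
    have pascal : ∑ j ∈ range (n + 2), (-1 : ℝ) ^ j * (n + 1).choose j / (x + j) =
        ∑ j ∈ range (n + 1), (-1 : ℝ) ^ j * n.choose j / (x + j) -
          ∑ j ∈ range (n + 1), (-1 : ℝ) ^ j * n.choose j / (x + 1 + j) := by
      calc _ = ∑ j ∈ range (n + 2), ((n + 1).choose j : ℝ) * ((-1 : ℝ) ^ j / (x + j)) :=
            sum_congr rfl fun _ _ => by ring
        _ = _ := sum_choose_succ_mul (fun j _ => (-1 : ℝ) ^ j / (x + j)) n
        _ = _ := by
          rw [sub_eq_add_neg, ← sum_neg_distrib]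
          congr 1 <;> refine sum_congr rfl fun j _ => ?_ <;> push_cast <;> ring
    have hG : Gamma (x + (n + 1 : ℕ) + 1) = (x + n + 1) * Gamma (x + n + 1) := by
      rw [Gamma_add_one (by positivity)]; push_cast; ring_nf
    have hx1 : x + 1 + n + 1 = x + (n + 1 : ℕ) + 1 := by push_cast; ring
    rw [pascal, ih hx, ih (by positivity), hx1, hG, Gamma_add_one hx.ne', factorial_succ]
    have hΓ : Gamma (x + n + 1) ≠ 0 := (Gamma_pos_of_pos (by positivity)).ne'
    have hxn : x + n + 1 ≠ 0 := by positivity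
    field_simp
    push_cast
    ring

noncomputable def genLaguerreCoeff (β : ℝ) (n j : ℕ) : ℝ :=
  (-1) ^ j * (Gamma (β + n + 1) / (Gamma (β + j + 1) * (n - j)!)) / j !

theorem genLaguerre_eq_sum (β : ℝ) (n : ℕ) (x : ℝ) :
    genLaguerre β n x = ∑ j ∈ range (n + 1), genLaguerreCoeff β n j * x ^ j :=
  sum_congr rfl fun _ _ => by rw [genLaguerreCoeff]; ring

theorem genLaguerre_zero_s17 {β : ℝ} (hβ : -1 < β) (x : ℝ) : genLaguerre β 0 x = 1 := by
  simp [genLaguerre, (Gamma_pos_of_pos (by linarith : 0 < β + 1)).ne']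

theorem genLaguerre_one {β : ℝ} (hβ : -1 < β) (x : ℝ) : genLaguerre β 1 x = β + 1 - x := by
  have hβ1 : β + 1 ≠ 0 := by linarith
  have hΓ := (Gamma_pos_of_pos (by linarith : 0 < β + 1)).ne'
  simp [genLaguerre, sum_range_succ, Gamma_add_one hβ1, hβ1, hΓ, sub_eq_add_neg]

theorem genLaguerreCoeff_mul_Gamma {β : ℝ} (hβ : -1 < β) {n j : ℕ} (hj : j ≤ n) :
    genLaguerreCoeff β n j * Gamma (β + j + 1) =
      Gamma (β + n + 1) / n ! * ((-1) ^ j * n.choose j) := by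
  have hΓ := (Gamma_pos_of_pos (by linarith [j.cast_nonneg (α := ℝ)] : 0 < β + j + 1)).ne'
  rw [genLaguerreCoeff, cast_choose ℝ hj]
  field_simp

theorem integrableOn_rpow_mul_exp_neg {s : ℝ} (hs : -1 < s) :
    IntegrableOn (fun ρ : ℝ => ρ ^ s * exp (-ρ)) (Ioi 0) := by
  simpa [mul_comm] using GammaIntegral_convergent (s := s + 1) (by linarith)

theorem integral_rpow_mul_exp_neg {s : ℝ} (hs : -1 < s) :
    ∫ ρ in Ioi (0 : ℝ), ρ ^ s * exp (-ρ) = Gamma (s + 1) := by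
  simp [Gamma_eq_integral (by linarith : 0 < s + 1), mul_comm]

theorem rpow_mul_exp_neg_mul_genLaguerre {α ρ : ℝ} (hρ : 0 < ρ) (β : ℝ) (n : ℕ) :
    ρ ^ α * exp (-ρ) * genLaguerre β n ρ =
      ∑ j ∈ range (n + 1), genLaguerreCoeff β n j * (ρ ^ (α + j) * exp (-ρ)) := by
  rw [genLaguerre_eq_sum, mul_sum]
  refine sum_congr rfl fun j _ => ?_
  rw [rpow_add hρ, rpow_natCast]
  ring

theorem integrableOn_rpow_mul_exp_neg_mul_genLaguerre {α : ℝ} (hα : -1 < α) (β : ℝ) (n : ℕ) :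
    IntegrableOn (fun ρ : ℝ => ρ ^ α * exp (-ρ) * genLaguerre β n ρ) (Ioi 0) := by
  refine IntegrableOn.congr_fun ?_ (fun ρ hρ => (rpow_mul_exp_neg_mul_genLaguerre hρ β n).symm)
    measurableSet_Ioi
  exact integrable_finsetSum _ fun j _ =>
    (integrableOn_rpow_mul_exp_neg (by linarith [j.cast_nonneg (α := ℝ)])).const_mul _

theorem integral_rpow_mul_exp_neg_mul_genLaguerre {α : ℝ} (hα : -1 < α) (β : ℝ) (n : ℕ) :
    ∫ ρ in Ioi (0 : ℝ), ρ ^ α * exp (-ρ) * genLaguerre β n ρ =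
      ∑ j ∈ range (n + 1), genLaguerreCoeff β n j * Gamma (α + j + 1) := by
  have hj : ∀ j : ℕ, -1 < α + j := fun j => by linarith [j.cast_nonneg (α := ℝ)]
  rw [setIntegral_congr_fun measurableSet_Ioi fun ρ hρ => rpow_mul_exp_neg_mul_genLaguerre hρ β n,
    integral_finsetSum _ fun j _ => (integrableOn_rpow_mul_exp_neg (hj j)).const_mul _]
  exact sum_congr rfl fun j _ => by rw [integral_const_mul, integral_rpow_mul_exp_neg (hj j)]

theorem integral_rpow_mul_exp_neg_mul_genLaguerre_self {α : ℝ} (hα : -1 < α) {n : ℕ}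
    (hn : 0 < n) : ∫ ρ in Ioi (0 : ℝ), ρ ^ α * exp (-ρ) * genLaguerre α n ρ = 0 := by
  have hchoose : ∑ j ∈ range (n + 1), (-1 : ℝ) ^ j * n.choose j = 0 := by
    exact_mod_cast (Int.alternating_sum_range_choose (n := n)).trans (if_neg hn.ne')
  rw [integral_rpow_mul_exp_neg_mul_genLaguerre hα,
    sum_congr rfl fun j hj => genLaguerreCoeff_mul_Gamma hα (mem_range_succ_iff.mp hj),
    ← mul_sum, hchoose, mul_zero]

theorem integral_rpow_mul_exp_neg_mul_genLaguerre_add_one {α : ℝ} (hα : -1 < α) (n : ℕ) :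
    ∫ ρ in Ioi (0 : ℝ), ρ ^ α * exp (-ρ) * genLaguerre (α + 1) n ρ = Gamma (α + 1) := by
  have hα1 : 0 < α + 1 := by linarith
  have term : ∀ j ∈ range (n + 1), genLaguerreCoeff (α + 1) n j * Gamma (α + j + 1) =
      Gamma (α + 1 + n + 1) / n ! * ((-1) ^ j * n.choose j / (α + 1 + j)) := by
    intro j hj
    have hj1 : α + j + 1 ≠ 0 := by linarith [j.cast_nonneg (α := ℝ)]
    rw [mul_div_assoc', ← genLaguerreCoeff_mul_Gamma (by linarith) (mem_range_succ_iff.mp hj),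
      show α + 1 + j + 1 = α + j + 1 + 1 by ring, Gamma_add_one hj1]
    field_simp
    ring
  rw [integral_rpow_mul_exp_neg_mul_genLaguerre hα, sum_congr rfl term, ← mul_sum,
    sum_range_alternating_choose_div hα1]
  have hΓ := (Gamma_pos_of_pos (by positivity : 0 < α + 1 + n + 1)).ne'
  field_simp

theorem integral_inv_one_add_mul_mul_sub {y : ℝ} (hy : 0 < y) (a : ℝ) {g : ℝ → ℝ}
    (hg : IntegrableOn g (Ioi 0)) :
    ∫ ρ in Ioi (0 : ℝ), (1 + y * ρ)⁻¹ * (a - ρ) * g ρ =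
      (a + 1 / y) * (∫ ρ in Ioi (0 : ℝ), (1 + y * ρ)⁻¹ * g ρ) - 1 / y * ∫ ρ in Ioi (0 : ℝ), g ρ := by
  have hKg : IntegrableOn (fun ρ => (1 + y * ρ)⁻¹ * g ρ) (Ioi 0) := by
    refine hg.bdd_mul (c := 1) (by fun_prop) ?_
    filter_upwards [ae_restrict_mem measurableSet_Ioi] with ρ (hρ : 0 < ρ)
    rw [norm_inv, Real.norm_of_nonneg (by positivity)]
    exact inv_le_one_of_one_le₀ (by nlinarith)
  have pointwise : ∀ ρ ∈ Ioi (0 : ℝ), (1 + y * ρ)⁻¹ * (a - ρ) * g ρ =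
      (a + 1 / y) * ((1 + y * ρ)⁻¹ * g ρ) - 1 / y * g ρ := by
    intro ρ (hρ : 0 < ρ)
    have hK : 1 + y * ρ ≠ 0 := by positivity
    field_simp
    ring
  rw [setIntegral_congr_fun measurableSet_Ioi pointwise, integral_sub (hKg.const_mul _)
    (hg.const_mul _), integral_const_mul, integral_const_mul]

theorem Imn_one_eq {α y : ℝ} (hα : -1 < α) (hy : 0 < y) (β : ℝ) (n : ℕ) :
    Imn α β y 1 n = (α + 1 + 1 / y) * Imn α β y 0 n -
      1 / y * ∫ ρ in Ioi (0 : ℝ), ρ ^ α * exp (-ρ) * genLaguerre β n ρ := by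
  have h0 : Imn α β y 0 n =
      ∫ ρ in Ioi (0 : ℝ), (1 + y * ρ)⁻¹ * (ρ ^ α * exp (-ρ) * genLaguerre β n ρ) := by
    simp only [Imn, genLaguerre_zero_s17 hα]
    congr 1 with ρ
    ring
  have h1 : Imn α β y 1 n =
      ∫ ρ in Ioi (0 : ℝ), (1 + y * ρ)⁻¹ * (α + 1 - ρ) * (ρ ^ α * exp (-ρ) * genLaguerre β n ρ) := by
    simp only [Imn, genLaguerre_one hα]
    congr 1 with ρ
    ring
  rw [h0, h1, integral_inv_one_add_mul_mul_sub hy _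
    (integrableOn_rpow_mul_exp_neg_mul_genLaguerre hα β n)]

theorem mul_Ibar_one_eq {α y : ℝ} (hα : -1 < α) (hy : 0 < y) (β : ℝ) (n : ℕ) :
    (α + 1) * Ibar α β y 1 n = (α + 1 + 1 / y) * Ibar α β y 0 n -
      1 / y * (∫ ρ in Ioi (0 : ℝ), ρ ^ α * exp (-ρ) * genLaguerre β n ρ) / Gamma (α + 1) := by
  have hα1 : α + 1 ≠ 0 := by linarith
  have hΓ := (Gamma_pos_of_pos (by linarith : 0 < α + 1)).ne'
  simp only [Ibar, Imn_one_eq hα hy, cast_one, cast_zero, factorial_one, factorial_zero, zero_add,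
    show (1 : ℝ) + α + 1 = α + 1 + 1 by ring, Gamma_add_one hα1]
  field_simp

theorem Shat_recurrence_m_zero (α y ω : ℝ) (hα : -1 < α) (hy : 0 < y)
    (n : ℕ) (hn : 0 < n) :
    (α + 1) * Shat α y ω 1 n = (α + 1 + 1 / y) * Shat α y ω 0 n - 1 / y := by
  have hΓ := (Gamma_pos_of_pos (by linarith : 0 < α + 1)).ne'
  simp only [Shat, mul_sub, mul_left_comm (α + 1), mul_Ibar_one_eq hα hy,
    integral_rpow_mul_exp_neg_mul_genLaguerre_add_one hα,
    integral_rpow_mul_exp_neg_mul_genLaguerre_self hα hn]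
  field_simp
  ring
end
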